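/- Let $\mathfrak{p}$ be a partition and let $\mathfrak{q}$ be obtained from $\mathfrak{p}$ by the $B$-collapse algorithm: extract the even parts into a decreasing sequence of even length (padding with a zero if necessary), apply operation $(\star)$ (each strictly decreasing adjacent pair $(a,b)$ with $a > b$, at odd-even positions, becomes $(a-1,b+1)$), and merge back with the odd parts. Then for every even part $q$ of $\mathfrak{q}$, the quantity $\mathfrak{B}(\mathfrak{q},q) := \sum_{\text{parts } s \text{ of } \mathfrak{q},\ s < q,\ s - q + 1 \in 2\mathbb{Z}}(\text{multiplicity of } s)$ satisfies $\mathfrak{B}(\mathfrak{q}, q) \equiv \mathfrak{B}(\mathfrak{p}, p) \pmod 2$, where $p$ is the corresponding part of $\mathfrak{p}$ from which $q$ arose (in particular $p = q$ when the part is unmodified by $(\star)$). -/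

import Mathlib

/-!
The parts of `𝔮` below an even part `q` and of opposite parity are the odd parts of `𝔭` below `q`
together with the odd entries below `q` created by `(⋆)`. These come in pairs `(a - 1, b + 1)`
from pairs `(a, b)` of even parts with `a > b`. An even part `q` of `𝔮` was never modified, so it
is itself an entry of the sorted even sequence, and no modified pair straddles it: each pair
contributes either both or none of its odd entries below `q`.
-/

/-- The operation `(⋆)`: in a sequence read as consecutive pairs, every strictly decreasing
pair `(a, b)` with `a > b` is replaced by `(a - 1, b + 1)`; all other entries are unchanged. -/
def starOp : List ℕ → List ℕ
  | a :: b :: rest => if b < a then (a - 1) :: (b + 1) :: starOp rest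
                      else a :: b :: starOp rest
  | l => l

/-- The parts of a multiset listed in non-increasing order. -/
def descSort (s : Multiset ℕ) : List ℕ :=
  (Multiset.sort s (· ≤ ·)).reverse

/-- The even parts of `𝔭`, listed decreasingly, with a `0` appended if needed to make the
number of entries even. -/
def evenSeq (p : Multiset ℕ) : List ℕ :=
  let l := descSort (p.filter (fun x => x % 2 = 0))
  if l.length % 2 = 0 then l else l ++ [0]

/-- The `B`-collapse algorithm: apply `(⋆)` to the (zero-padded) decreasing sequence of even
parts of `𝔭`, recombine with the odd parts, and discard zeros. -/
def bCollapse (p : Multiset ℕ) : Multiset ℕ :=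
  ((starOp (evenSeq p) : List ℕ) : Multiset ℕ).filter (fun x => 0 < x)
    + p.filter (fun x => x % 2 = 1)

/-- `𝔅(𝔭, q)`: the total multiplicity of parts `s` of `𝔭` with `s < q` and of parity
opposite to `q`. -/
def partB (p : Multiset ℕ) (q : ℕ) : ℕ :=
  Multiset.card (p.filter (fun s => s < q ∧ s % 2 ≠ q % 2))

lemma starOp_cons_cons (a b : ℕ) (rest : List ℕ) :
    starOp (a :: b :: rest) = starOp [a, b] ++ starOp rest := by
  simp only [starOp]
  split_ifs <;> rfl

lemma mem_of_mem_starOp {q : ℕ} (hq : q % 2 = 0) :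
    ∀ {l : List ℕ}, (∀ x ∈ l, x % 2 = 0) → q ∈ starOp l → q ∈ l
  | [], _, h => h
  | [_], _, h => h
  | a :: b :: rest, hl, h => by
    have ha := hl a (by simp)
    have hb := hl b (by simp)
    rw [starOp_cons_cons, List.mem_append] at h
    rcases h with h | h
    · simp only [starOp] at h
      split_ifs at h <;> simp at h <;> grind
    · exact List.mem_cons_of_mem _ <| List.mem_cons_of_mem _ <|
        mem_of_mem_starOp hq (fun x hx => hl x (by simp [hx])) h

lemma even_countP_starOp_pair {a b q : ℕ} (ha : a % 2 = 0) (hb : b % 2 = 0) (hq : q % 2 = 0)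
    (hout : a ≤ q ∨ q ≤ b) :
    Even ((starOp [a, b]).countP (fun s => s < q ∧ s % 2 = 1)) := by
  simp only [starOp]
  split_ifs <;> simp only [List.countP_cons, List.countP_nil] <;> split_ifs <;> grind

lemma even_countP_starOp {q : ℕ} (hq : q % 2 = 0) :
    ∀ {l : List ℕ}, (∀ x ∈ l, x % 2 = 0) → l.Pairwise (· ≥ ·) → (q ∈ l ∨ ∀ x ∈ l, x ≤ q) →
      Even ((starOp l).countP (fun s => s < q ∧ s % 2 = 1))
  | [], _, _, _ => by simp [starOp]
  | [a], hl, _, _ => by simp [starOp, hl a (by simp)]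
  | a :: b :: rest, hl, hsort, hq_mem => by
    have ha := hl a (by simp)
    have hb := hl b (by simp)
    simp only [List.pairwise_cons, List.mem_cons, forall_eq_or_imp] at hsort
    obtain ⟨⟨hba, har⟩, hbr, hrest⟩ := hsort
    have hpair : a ≤ q ∨ q ≤ b := by
      rcases hq_mem with h | h
      · simp only [List.mem_cons] at h
        rcases h with rfl | rfl | h
        · exact .inl le_rfl
        · exact .inr le_rfl
        · exact .inr (hbr q h)
      · exact .inl (h a (by simp))
    have hq_rest : q ∈ rest ∨ ∀ x ∈ rest, x ≤ q := by
      rcases hq_mem with h | h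
      · simp only [List.mem_cons] at h
        rcases h with rfl | rfl | h
        · exact .inr fun x hx => (hbr x hx).trans hba
        · exact .inr hbr
        · exact .inl h
      · exact .inr fun x hx => h x (by simp [hx])
    rw [starOp_cons_cons, List.countP_append]
    exact (even_countP_starOp_pair ha hb hq hpair).add
      (even_countP_starOp hq (fun x hx => hl x (by simp [hx])) hrest hq_rest)

lemma descSort_pairwise (s : Multiset ℕ) : (descSort s).Pairwise (· ≥ ·) :=
  List.pairwise_reverse.mpr (Multiset.pairwise_sort s (· ≤ ·))

lemma evenSeq_pairwise (p : Multiset ℕ) : (evenSeq p).Pairwise (· ≥ ·) := by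
  unfold evenSeq
  dsimp only
  split
  · exact descSort_pairwise _
  · exact List.pairwise_append.mpr ⟨descSort_pairwise _, by simp, by simp⟩

lemma mod_two_eq_zero_of_mem_evenSeq {p : Multiset ℕ} {x : ℕ} (hx : x ∈ evenSeq p) :
    x % 2 = 0 := by
  unfold evenSeq descSort at hx
  dsimp only at hx
  split at hx <;> simp at hx <;> omega

lemma mem_starOp_evenSeq {p : Multiset ℕ} {q : ℕ} (hq : q % 2 = 0) (h : q ∈ bCollapse p) :
    q ∈ starOp (evenSeq p) := by
  simp only [bCollapse, Multiset.mem_add, Multiset.mem_filter, Multiset.mem_coe] at h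
  rcases h with ⟨h, _⟩ | ⟨_, h⟩
  · exact h
  · omega

lemma partB_bCollapse (p : Multiset ℕ) {q : ℕ} (hq : q % 2 = 0) :
    partB (bCollapse p) q =
      (starOp (evenSeq p)).countP (fun s => s < q ∧ s % 2 = 1) + partB p q := by
  simp only [partB, bCollapse, Multiset.filter_add, Multiset.card_add, Multiset.filter_filter]
  congr 1
  · rw [← Multiset.coe_countP, Multiset.countP_eq_card_filter]
    congr 1
    exact Multiset.filter_congr fun x _ => by omega
  · congr 1
    exact Multiset.filter_congr fun x _ => by omega

theorem stmt14_general (p : Multiset ℕ) :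
    ∀ q ∈ bCollapse p, Even q → partB (bCollapse p) q % 2 = partB p q % 2 := by
  intro q hq_mem hq
  have hq2 : q % 2 = 0 := Nat.even_iff.mp hq
  have hev : ∀ x ∈ evenSeq p, x % 2 = 0 := fun _ => mod_two_eq_zero_of_mem_evenSeq
  have hqE : q ∈ evenSeq p := mem_of_mem_starOp hq2 hev (mem_starOp_evenSeq hq2 hq_mem)
  obtain ⟨k, hk⟩ := even_countP_starOp hq2 hev (evenSeq_pairwise p) (.inl hqE)
  rw [partB_bCollapse p hq2, hk]
  omega

/-- Let `𝔮` be the `B`-collapse of a partition `𝔭`.  For every even part `q` of `𝔮` (even parts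
of `𝔮` are exactly the parts left unmodified by the operation `(⋆)`, so the corresponding part
of `𝔭` is `q` itself), one has `𝔅(𝔮, q) ≡ 𝔅(𝔭, q) (mod 2)`. -/
theorem stmt14 (p : Multiset ℕ) (hpos : ∀ x ∈ p, 0 < x) :
    ∀ q ∈ bCollapse p, Even q → partB (bCollapse p) q % 2 = partB p q % 2 :=
  stmt14_general p
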